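/- Rewriting evaluates closed formulas: if the DeMorgan formula t contains no variables, then t →*_{R_B} 1 if eval t = true and t →*_{R_B} ¬1 if eval t = false, and the constants 1 and ¬1 are in R_B-normal form; hence normalizing a variable-free formula with R_B computes its Boolean value. -/

import Mathlib

/-- DeMorgan formulas: variables, constants 0 and 1, negation, conjunction, disjunction. -/
inductive Fm : Type
  | var : ℕ → Fm
  | zero : Fm
  | one : Fm
  | not : Fm → Fm
  | and : Fm → Fm → Fm
  | or : Fm → Fm → Fm
deriving DecidableEq

/-- Evaluation of a DeMorgan formula under an assignment. -/
def Fm.eval (σ : ℕ → Bool) : Fm → Bool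
  | .var n => σ n
  | .zero => false
  | .one => true
  | .not t => !(t.eval σ)
  | .and t u => t.eval σ && u.eval σ
  | .or t u => t.eval σ || u.eval σ

/-- The root rewrite rules of the term rewriting system `R_B`
(the rule variable `g` stands for an arbitrary formula). -/
inductive RB : Fm → Fm → Prop
  | zero_def : RB .zero (.not .one)
  | not_not (g : Fm) : RB (.not (.not g)) g
  | and_idem (g : Fm) : RB (.and g g) g
  | or_idem (g : Fm) : RB (.or g g) g
  | and_notone_r (g : Fm) : RB (.and g (.not .one)) (.not .one)
  | and_notone_l (g : Fm) : RB (.and (.not .one) g) (.not .one)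
  | or_one_r (g : Fm) : RB (.or g .one) .one
  | or_one_l (g : Fm) : RB (.or .one g) .one
  | and_one_r (g : Fm) : RB (.and g .one) g
  | and_one_l (g : Fm) : RB (.and .one g) g
  | or_notone_r (g : Fm) : RB (.or g (.not .one)) g
  | or_notone_l (g : Fm) : RB (.or (.not .one) g) g
  | and_not_self_r (g : Fm) : RB (.and g (.not g)) (.not .one)
  | and_not_self_l (g : Fm) : RB (.and (.not g) g) (.not .one)
  | or_not_self_r (g : Fm) : RB (.or g (.not g)) .one
  | or_not_self_l (g : Fm) : RB (.or (.not g) g) .one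

/-- One rewrite step of `R_B`: a rule applied to a single subterm. -/
inductive Step : Fm → Fm → Prop
  | rule {t u : Fm} : RB t u → Step t u
  | not {t u : Fm} : Step t u → Step (.not t) (.not u)
  | and_left {t t' u : Fm} : Step t t' → Step (.and t u) (.and t' u)
  | and_right {t u u' : Fm} : Step u u' → Step (.and t u) (.and t u')
  | or_left {t t' u : Fm} : Step t t' → Step (.or t u) (.or t' u)
  | or_right {t u u' : Fm} : Step u u' → Step (.or t u) (.or t u')

/-- The reflexive transitive closure of one-step rewriting. -/
def Steps : Fm → Fm → Prop := Relation.ReflTransGen Step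

/-- A formula is in normal form when no rule applies to any of its subterms. -/
def NormalForm (t : Fm) : Prop := ¬ ∃ u, Step t u

/-- A formula is variable-free (closed) when it contains no variables. -/
def Fm.VarFree : Fm → Prop
  | .var _ => False
  | .zero => True
  | .one => True
  | .not t => t.VarFree
  | .and t u => t.VarFree ∧ u.VarFree
  | .or t u => t.VarFree ∧ u.VarFree

/-!
Rewriting inside subterms, a closed formula reduces bottom-up to the constant `1` or `¬1` of its
value: `0 → ¬1` handles the constant `0`, and on the constants `1`, `¬1` the rules `¬¬g → g`,
`¬1 ∧ g → ¬1`, `1 ∧ g → g`, `¬1 ∨ g → g`, `1 ∨ g → 1` realise the truth tables of `¬`, `∧`, `∨`.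
-/

namespace Steps

variable {t t' u u' : Fm}

theorem not (h : Steps t u) : Steps (.not t) (.not u) :=
  h.lift Fm.not fun _ _ => Step.not

theorem and (ht : Steps t t') (hu : Steps u u') : Steps (.and t u) (.and t' u') :=
  (ht.lift (Fm.and · u) fun _ _ => Step.and_left).trans
    (hu.lift (Fm.and t' ·) fun _ _ => Step.and_right)

theorem or (ht : Steps t t') (hu : Steps u u') : Steps (.or t u) (.or t' u') :=
  (ht.lift (Fm.or · u) fun _ _ => Step.or_left).trans
    (hu.lift (Fm.or t' ·) fun _ _ => Step.or_right)

end Steps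

theorem RB.steps {t u : Fm} (h : RB t u) : Steps t u :=
  .single (.rule h)

namespace Fm

def ofBool : Bool → Fm
  | true => .one
  | false => .not .one

theorem steps_not_ofBool (a : Bool) : Steps (.not (ofBool a)) (ofBool !a) := by
  cases a
  · exact (RB.not_not _).steps
  · exact .refl

theorem steps_and_ofBool (a b : Bool) :
    Steps (.and (ofBool a) (ofBool b)) (ofBool (a && b)) := by
  cases a
  · exact (RB.and_notone_l _).steps
  · exact (RB.and_one_l _).steps

theorem steps_or_ofBool (a b : Bool) :
    Steps (.or (ofBool a) (ofBool b)) (ofBool (a || b)) := by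
  cases a
  · exact (RB.or_notone_l _).steps
  · exact (RB.or_one_l _).steps

theorem steps_ofBool_eval {t : Fm} (ht : t.VarFree) (σ : ℕ → Bool) :
    Steps t (ofBool (t.eval σ)) := by
  induction t with
  | var => exact ht.elim
  | zero => exact RB.zero_def.steps
  | one => exact .refl
  | not s ih => exact (ih ht).not.trans (steps_not_ofBool _)
  | and s u ihs ihu => exact ((ihs ht.1).and (ihu ht.2)).trans (steps_and_ofBool _ _)
  | or s u ihs ihu => exact ((ihs ht.1).or (ihu ht.2)).trans (steps_or_ofBool _ _)

end Fm

theorem normalForm_one : NormalForm .one := by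
  rintro ⟨u, h⟩
  cases h with
  | rule h => cases h

theorem normalForm_not_one : NormalForm (.not .one) := by
  rintro ⟨u, h⟩
  cases h with
  | rule h => cases h
  | not h => cases h with
    | rule h => cases h

/-- Rewriting evaluates closed formulas: a variable-free formula rewrites
to `1` if it evaluates to `true` and to `¬1` if it evaluates to `false`, and both `1`
and `¬1` are in `R_B`-normal form. -/
theorem RB_evaluates_closed :
    (∀ t : Fm, t.VarFree → ∀ σ : ℕ → Bool,
      (t.eval σ = true → Steps t .one) ∧ (t.eval σ = false → Steps t (.not .one))) ∧
    NormalForm .one ∧ NormalForm (.not .one) := by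
  refine ⟨fun t ht σ => ⟨fun h => ?_, fun h => ?_⟩, normalForm_one, normalForm_not_one⟩ <;>
    simpa only [h, Fm.ofBool] using Fm.steps_ofBool_eval ht σ
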